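/- arXiv:0904.3362 — 2 statements merged into one kernel-verified Lean document; each statement's English description precedes it below -/
import Mathlib

section
/- Let V be a finite-dimensional complex vector space and A an invertible linear endomorphism of V. The multiplicative Jordan–Chevalley decomposition of A is unique: if A = S ∘ U = U ∘ S with S semisimple and U unipotent, and also A = S' ∘ U' = U' ∘ S' with S' semisimple and U' unipotent, then S = S' and U = U'. -/
/-- An endomorphism `S` of a complex vector space is semisimple if every
`S`-invariant subspace has an `S`-invariant complement. -/
def IsSemisimpleEnd {V : Type*} [AddCommGroup V] [Module ℂ V]
    (S : Module.End ℂ V) : Prop :=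
  ∀ W : Submodule ℂ V, W.map S ≤ W →
    ∃ W' : Submodule ℂ V, W'.map S ≤ W' ∧ IsCompl W W'

/-! The multiplicative decomposition `s * u` is turned into the additive one
`s * (u - 1) + s`, whose uniqueness is `Module.End.isNilpotent_isSemisimple_unique`;
once the semisimple parts agree, the unipotent parts agree because `s` is invertible. -/

lemma isSemisimpleEnd_iff_isSemisimple {V : Type*} [AddCommGroup V] [Module ℂ V]
    (S : Module.End ℂ V) : IsSemisimpleEnd S ↔ S.IsSemisimple := by
  simp only [Module.End.isSemisimple_iff, Module.End.mem_invtSubmodule,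
    ← Submodule.map_le_iff_le_comap, IsSemisimpleEnd]

namespace Module.End

variable {K V : Type*} [Field K] [PerfectField K] [AddCommGroup V] [Module K V]
  [FiniteDimensional K V]

theorem isSemisimple_isUnipotent_unique {s₁ u₁ s₂ u₂ : End K V}
    (hs₁ : s₁.IsSemisimple) (hu₁ : IsNilpotent (u₁ - 1))
    (hs₂ : s₂.IsSemisimple) (hu₂ : IsNilpotent (u₂ - 1))
    (hc₁ : Commute s₁ u₁) (hc₂ : Commute s₂ u₂)
    (hunit : IsUnit (s₁ * u₁)) (h : s₁ * u₁ = s₂ * u₂) :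
    s₁ = s₂ ∧ u₁ = u₂ := by
  have additive {s u : End K V} (hc : Commute s u) :
      s * u = s * (u - 1) + s ∧ Commute (s * (u - 1)) s :=
    ⟨by noncomm_ring, ((Commute.refl s).mul_right (hc.sub_right (Commute.one_right s))).symm⟩
  have nilpotent {s u : End K V} (hc : Commute s u) (hu : IsNilpotent (u - 1)) :
      IsNilpotent (s * (u - 1)) :=
    (hc.sub_right (Commute.one_right s)).isNilpotent_mul_left hu
  obtain ⟨eq₁, comm₁⟩ := additive hc₁
  obtain ⟨eq₂, comm₂⟩ := additive hc₂
  have hs : s₁ = s₂ := (isNilpotent_isSemisimple_unique (nilpotent hc₁ hu₁) hs₁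
    (nilpotent hc₂ hu₂) hs₂ comm₁ comm₂ (eq₁.symm.trans (h.trans eq₂))).2
  subst hs
  exact ⟨rfl, ((hc₁.isUnit_mul_iff.mp hunit).1).mul_left_cancel h⟩

end Module.End

/-- Uniqueness of the multiplicative Jordan–Chevalley decomposition of an
invertible endomorphism of a finite-dimensional complex vector space. -/
theorem jordan_chevalley_unique {V : Type*} [AddCommGroup V] [Module ℂ V]
    [FiniteDimensional ℂ V] (A : Module.End ℂ V) (hA : IsUnit A)
    (S U S' U' : Module.End ℂ V)
    (h1 : A = S * U) (h2 : A = U * S)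
    (hS : IsSemisimpleEnd S) (hU : IsNilpotent (U - 1))
    (h1' : A = S' * U') (h2' : A = U' * S')
    (hS' : IsSemisimpleEnd S') (hU' : IsNilpotent (U' - 1)) :
    S = S' ∧ U = U' := by
  rw [isSemisimpleEnd_iff_isSemisimple] at hS hS'
  subst h1
  exact Module.End.isSemisimple_isUnipotent_unique hS hU hS' hU' h2 (h1'.symm.trans h2')
    hA h1'
end

section
/- Let A be an invertible n×n complex matrix with multiplicative Jordan–Chevalley decomposition A = S·U = U·S, where S is semisimple (diagonalizable) and U is unipotent. Then S lies in the topological closure of the conjugation orbit {g·A·g⁻¹ : g ∈ GL(n,ℂ)} of A in the space of n×n complex matrices. (Used in Step 4 of the proof of the main theorem to show the diagonal Hopf manifold is an arbitrarily small deformation of the original Hopf manifold.) -/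
/-!
Write `U = 1 + N` with `N` nilpotent. The kernels `ker N ^ k` are `S`-stable, hence spanned by
eigenvectors of the diagonalizable `S`, so `S` has an eigenbasis adapted to the flag
`ker N ⊆ ker N ^ 2 ⊆ ⋯`. Let `w i` be the least `k` with `N ^ k` killing the `i`-th basis vector.
In this basis `S = diagonal c` and `A = diagonal c + K` with `K i j ≠ 0` only if `w i < w j`.
Conjugating by `diagonal (t ^ w i)⁻¹` multiplies `K i j` by `t ^ (w j - w i)`, so as `t → 0`
these conjugates of `A` tend to `diagonal c`, which is conjugate to `S`.
-/

open Matrix Module Submodule Set Filter Topology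

section DivisionRing

variable {K V : Type*} [DivisionRing K] [AddCommGroup V] [Module K V]

theorem exists_linearIndepOn_le_span_inter_of_monotone {T : Set V} {F : ℕ → Submodule K V}
    (hF : Monotone F) (hT : ∀ k, F k ≤ span K (T ∩ F k)) {m : ℕ} (hm : F m = ⊤) :
    ∃ s ⊆ T, LinearIndepOn K id s ∧ ∀ k, F k ≤ span K (s ∩ F k) := by
  have extend (k : ℕ) (s : Set V) (hs : s ⊆ T ∩ F k) (hli : LinearIndepOn K id s) :
      ∃ s' ⊆ T ∩ F k, s ⊆ s' ∧ LinearIndepOn K id s' ∧ F k ≤ span K (s' ∩ F k) := by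
    obtain ⟨s', hs'T, hss', hTs', hli'⟩ := exists_linearIndepOn_id_extension hli hs
    refine ⟨s', hs'T, hss', hli', (hT k).trans ?_⟩
    rw [inter_eq_left.mpr (hs'T.trans inter_subset_right)]
    exact span_le.mpr hTs'
  have upTo (m : ℕ) :
      ∃ s ⊆ T ∩ F m, LinearIndepOn K id s ∧ ∀ k ≤ m, F k ≤ span K (s ∩ F k) := by
    induction m with
    | zero =>
      obtain ⟨s, hsT, -, hli, hspan⟩ := extend 0 ∅ (empty_subset _) (linearIndepOn_empty K id)
      exact ⟨s, hsT, hli, fun k hk => Nat.le_zero.mp hk ▸ hspan⟩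
    | succ m ih =>
      obtain ⟨s, hsT, hli, hspan⟩ := ih
      obtain ⟨s', hs'T, hss', hli', hspan'⟩ :=
        extend (m + 1) s (fun x hx => ⟨(hsT hx).1, hF m.le_succ (hsT hx).2⟩) hli
      refine ⟨s', hs'T, hli', fun k hk => ?_⟩
      rcases Nat.lt_or_eq_of_le hk with hk | rfl
      · exact (hspan k (Nat.lt_succ_iff.mp hk)).trans
          (span_mono (inter_subset_inter_left _ hss'))
      · exact hspan'
  obtain ⟨s, hsT, hli, hspan⟩ := upTo m
  refine ⟨s, hsT.trans inter_subset_left, hli, fun k => ?_⟩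
  rcases le_total k m with hk | hk
  · exact hspan k hk
  · calc F k ≤ F m := hm ▸ le_top
      _ ≤ span K (s ∩ F m) := hspan m le_rfl
      _ ≤ span K (s ∩ F k) := span_mono (inter_subset_inter_right _ (hF hk))

theorem Module.Basis.repr_apply_eq_zero_of_ker_pow_le_span {ι : Type*} (b : Basis ι K V)
    {N : End K V}
    (hb : ∀ k, LinearMap.ker (N ^ k) ≤ span K (range b ∩ LinearMap.ker (N ^ k)))
    {w : ι → ℕ} (hw : ∀ i k, (N ^ k) (b i) = 0 ↔ w i ≤ k) {i j : ι} (hij : w j ≤ w i) :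
    b.repr (N (b j)) i = 0 := by
  obtain ⟨k, hk⟩ : ∃ k, w j = k + 1 := by
    refine Nat.exists_eq_add_one.mpr (Nat.pos_of_ne_zero fun h => b.ne_zero j ?_)
    simpa using (hw j 0).mpr h.le
  have hker : N (b j) ∈ LinearMap.ker (N ^ k) := by
    rw [LinearMap.mem_ker, ← End.mul_apply, ← pow_succ, hw, hk]
  have hsupp := hb k hker
  rw [← image_preimage_eq_range_inter, b.mem_span_image] at hsupp
  by_contra h
  have := (hw i k).mp (hsupp (Finsupp.mem_support_iff.mpr h))
  omega

end DivisionRing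

section Field

variable {K V : Type*} [Field K] [AddCommGroup V] [Module K V]

theorem Submodule.le_span_inter_iUnion_eigenspace [FiniteDimensional K V] {f : End K V}
    {p : Submodule K V} (hp : ∀ x ∈ p, f x ∈ p) (hf : ⨆ μ, f.eigenspace μ = ⊤) :
    p ≤ span K ((⋃ μ, (f.eigenspace μ : Set V)) ∩ p) :=
  (eq_iSup_inf_genEigenspace 1 hp hf).le.trans <|
    iSup_le fun μ _ hx => subset_span ⟨mem_iUnion_of_mem μ hx.2, hx.1⟩

theorem Module.End.exists_basis_eigenvectors_strictTriangular [FiniteDimensional K V]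
    {ι : Type*} (b₀ : Basis ι K V) {f N : End K V} (hf : ⨆ μ, f.eigenspace μ = ⊤)
    (hfN : Commute f N) (hN : IsNilpotent N) :
    ∃ (b : Basis ι K V) (c : ι → K) (w : ι → ℕ),
      (∀ i, f (b i) = c i • b i) ∧ ∀ i j, w j ≤ w i → b.repr (N (b j)) i = 0 := by
  classical
  obtain ⟨m, hm⟩ := hN
  let F (k : ℕ) : Submodule K V := LinearMap.ker (N ^ k)
  have hF : Monotone F := fun k l hkl x hx => pow_map_zero_of_le hkl hx
  have hfF (k : ℕ) : ∀ x ∈ F k, f x ∈ F k := fun x hx => by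
    rw [LinearMap.mem_ker, ← mul_apply, ← (hfN.pow_right k).eq, mul_apply,
      LinearMap.mem_ker.mp hx, map_zero]
  obtain ⟨s, hsT, hli, hspan⟩ := exists_linearIndepOn_le_span_inter_of_monotone hF
    (fun k => le_span_inter_iUnion_eigenspace (hfF k) hf) (m := m) (by simp [F, hm])
  have hsp : ⊤ ≤ span K (range ((↑) : s → V)) := by
    simpa [F, hm] using hspan m
  let b₁ := Basis.mk hli.linearIndependent hsp
  let b := b₁.reindex (b₁.indexEquiv b₀)
  have hb : range b = s := by simp [b, b₁]
  choose c hc using fun i => mem_iUnion.mp (hsT (hb ▸ mem_range_self i : b i ∈ s))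
  have hex (i : ι) : ∃ k, (N ^ k) (b i) = 0 := ⟨m, by simp [hm]⟩
  have hw (i : ι) (k : ℕ) : (N ^ k) (b i) = 0 ↔ Nat.find (hex i) ≤ k :=
    ⟨Nat.find_min' (hex i), fun h => pow_map_zero_of_le h (Nat.find_spec (hex i))⟩
  exact ⟨b, c, fun i => Nat.find (hex i), fun i => mem_eigenspace_iff.mp (hc i),
    fun i j => b.repr_apply_eq_zero_of_ker_pow_le_span (fun k => hb ▸ hspan k) hw⟩

end Field

section Matrix

variable {K ι : Type*} [Field K] [Fintype ι] [DecidableEq ι]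

theorem Matrix.iSup_eigenspace_toLin'_conj_diagonal (P : (Matrix ι ι K)ˣ) (d : ι → K) :
    ⨆ μ, End.eigenspace (toLin' ((P : Matrix ι ι K) * diagonal d * (↑P⁻¹ : Matrix ι ι K))) μ =
      ⊤ := by
  let b := (Pi.basisFun K ι).map (toLinearEquiv' (P : Matrix ι ι K) P.invertible)
  rw [eq_top_iff, ← b.span_eq, span_le]
  rintro _ ⟨i, rfl⟩
  refine mem_iSup_of_mem (d i) (End.mem_eigenspace_iff.mpr ?_)
  have hdi : diagonal d *ᵥ Pi.single i 1 = d i • Pi.single i 1 := by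
    rw [diagonal_mulVec_single, ← smul_eq_mul, Pi.single_smul']
  rw [Basis.map_apply, Pi.basisFun_apply]
  change _ *ᵥ ((P : Matrix ι ι K) *ᵥ Pi.single i 1) = d i • ((P : Matrix ι ι K) *ᵥ Pi.single i 1)
  rw [mulVec_mulVec, Units.inv_mul_cancel_right, ← mulVec_mulVec, hdi, mulVec_smul]

theorem Matrix.exists_smul_eq_diagonal_of_commute_isNilpotent {S N : Matrix ι ι K}
    (hS : ⨆ μ, End.eigenspace (toLin' S) μ = ⊤) (hSN : Commute S N) (hN : IsNilpotent N) :
    ∃ (g : ConjAct (Matrix ι ι K)ˣ) (c : ι → K) (w : ι → ℕ),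
      g • S = diagonal c ∧ ∀ i j, w j ≤ w i → (g • N) i j = 0 := by
  obtain ⟨b, c, w, hc, hw⟩ := End.exists_basis_eigenvectors_strictTriangular (Pi.basisFun K ι)
    hS (hSN.map toLinAlgEquiv') (hN.map toLinAlgEquiv')
  let e := Pi.basisFun K ι
  let g : (Matrix ι ι K)ˣ :=
    ⟨b.toMatrix e, e.toMatrix b, b.toMatrix_mul_toMatrix_flip e, e.toMatrix_mul_toMatrix_flip b⟩
  have hg (M : Matrix ι ι K) : ConjAct.toConjAct g • M = LinearMap.toMatrix b b (toLin' M) := by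
    rw [ConjAct.units_smul_def, ← basis_toMatrix_mul_linearMap_toMatrix_mul_basis_toMatrix b e b e,
      LinearMap.toMatrix_eq_toMatrix', LinearMap.toMatrix'_toLin']
    rfl
  refine ⟨ConjAct.toConjAct g, c, w, ?_, fun i j h => ?_⟩
  · ext i j
    rw [hg, LinearMap.toMatrix_apply, hc, map_smul, b.repr_self]
    by_cases h : i = j <;> simp [h]
  · rw [hg, LinearMap.toMatrix_apply]
    exact hw i j h

end Matrix

theorem ConjAct.orbit_units_eq {M : Type*} [Monoid M] (a : M) :
    MulAction.orbit (ConjAct Mˣ) a = {b | ∃ g : Mˣ, b = g * a * ↑g⁻¹} := by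
  ext b
  simp [MulAction.mem_orbit_iff, units_smul_def, ConjAct.toConjAct.surjective.exists, eq_comm]

theorem Matrix.diagonal_mem_closure_orbit_diagonal_add {𝕜 ι : Type*} [NontriviallyNormedField 𝕜]
    [Fintype ι] [DecidableEq ι] (c : ι → 𝕜) {K : Matrix ι ι 𝕜} {w : ι → ℕ}
    (hK : ∀ i j, w j ≤ w i → K i j = 0) :
    diagonal c ∈ closure (MulAction.orbit (ConjAct (Matrix ι ι 𝕜)ˣ) (diagonal c + K)) := by
  -- the truncated subtraction `w j - w i` only occurs where `K i j = 0`
  let F (t : 𝕜) : Matrix ι ι 𝕜 := diagonal c + of fun i j => t ^ (w j - w i) * K i j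
  have hF : Continuous F := by fun_prop
  have hF0 : F 0 = diagonal c := by
    ext i j
    rcases le_or_gt (w j) (w i) with h | h
    · simp [F, hK i j h]
    · simp [F, zero_pow (Nat.sub_ne_zero_of_lt h)]
  have hFt (t : 𝕜) (ht : t ≠ 0) :
      F t ∈ MulAction.orbit (ConjAct (Matrix ι ι 𝕜)ˣ) (diagonal c + K) := by
    let g : (Matrix ι ι 𝕜)ˣ :=
      ⟨diagonal fun i => (t ^ w i)⁻¹, diagonal fun i => t ^ w i, by simp [ht], by simp [ht]⟩
    refine ⟨ConjAct.toConjAct g, ?_⟩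
    ext i j
    change (ConjAct.toConjAct g • (diagonal c + K)) i j = F t i j
    rw [ConjAct.units_smul_def]
    simp only [ConjAct.ofConjAct_toConjAct, g, Units.inv_mk, diagonal_mul, mul_diagonal,
      add_apply, F, of_apply]
    by_cases hij : i = j
    · subst hij
      simp only [diagonal_apply_eq, hK i i le_rfl, add_zero, mul_zero]
      field_simp
    rw [diagonal_apply_ne _ hij]
    rcases le_or_gt (w j) (w i) with h | h
    · simp [hK i j h]
    · rw [pow_sub₀ t ht h.le]
      ring
  have hlim : Tendsto F (𝓝[≠] 0) (𝓝 (diagonal c)) :=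
    hF0 ▸ (hF.tendsto 0).mono_left nhdsWithin_le_nhds
  exact mem_closure_of_tendsto hlim (eventually_mem_nhdsWithin.mono hFt)

theorem semisimple_part_mem_closure_conjugation_orbit_general {n : ℕ}
    (A S U : Matrix (Fin n) (Fin n) ℂ)
    (h1 : A = S * U) (h2 : A = U * S)
    (hS : ∃ P : (Matrix (Fin n) (Fin n) ℂ)ˣ, ∃ d : Fin n → ℂ,
      S = (P : Matrix (Fin n) (Fin n) ℂ) * Matrix.diagonal d *
        ((P⁻¹ : (Matrix (Fin n) (Fin n) ℂ)ˣ) : Matrix (Fin n) (Fin n) ℂ))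
    (hU : IsNilpotent (U - 1)) :
    S ∈ closure {B : Matrix (Fin n) (Fin n) ℂ |
      ∃ g : (Matrix (Fin n) (Fin n) ℂ)ˣ,
        B = (g : Matrix (Fin n) (Fin n) ℂ) * A *
          ((g⁻¹ : (Matrix (Fin n) (Fin n) ℂ)ˣ) : Matrix (Fin n) (Fin n) ℂ)} := by
  obtain ⟨P, d, rfl⟩ := hS
  have hSU : Commute _ U := h1.symm.trans h2
  obtain ⟨g, c, w, hgS, hgN⟩ := exists_smul_eq_diagonal_of_commute_isNilpotent
    (iSup_eigenspace_toLin'_conj_diagonal P d) (hSU.sub_right (.one_right _)) hU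
  have hgU : g • U = 1 + g • (U - 1) := by
    rw [ConjAct.units_smul_def, ConjAct.units_smul_def, mul_sub, sub_mul, mul_one,
      Units.mul_inv, add_sub_cancel]
  have hgA : g • A = diagonal c + diagonal c * g • (U - 1) := by
    rw [h1, smul_mul', hgS, hgU, mul_add, mul_one]
  have hc : diagonal c ∈ closure (MulAction.orbit (ConjAct (Matrix (Fin n) (Fin n) ℂ)ˣ) A) := by
    rw [← MulAction.orbit_smul g A, hgA]
    exact diagonal_mem_closure_orbit_diagonal_add c (w := w) fun i j h => by
      simp [diagonal_mul, hgN i j h]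
  rw [← ConjAct.orbit_units_eq, ← inv_smul_smul g (_ * _ * _), hgS]
  exact smul_closure_orbit_subset g⁻¹ A (smul_mem_smul_set hc)

/-- The semisimple part `S` of the multiplicative Jordan–Chevalley
decomposition `A = S * U = U * S` of an invertible complex matrix `A` lies in
the closure of the conjugation orbit `{g * A * g⁻¹ : g ∈ GL(n, ℂ)}` of `A`. -/
theorem semisimple_part_mem_closure_conjugation_orbit {n : ℕ}
    (A S U : Matrix (Fin n) (Fin n) ℂ) (hA : IsUnit A)
    (h1 : A = S * U) (h2 : A = U * S)
    (hS : ∃ P : (Matrix (Fin n) (Fin n) ℂ)ˣ, ∃ d : Fin n → ℂ,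
      S = (P : Matrix (Fin n) (Fin n) ℂ) * Matrix.diagonal d *
        ((P⁻¹ : (Matrix (Fin n) (Fin n) ℂ)ˣ) : Matrix (Fin n) (Fin n) ℂ))
    (hU : IsNilpotent (U - 1)) :
    S ∈ closure {B : Matrix (Fin n) (Fin n) ℂ |
      ∃ g : (Matrix (Fin n) (Fin n) ℂ)ˣ,
        B = (g : Matrix (Fin n) (Fin n) ℂ) * A *
          ((g⁻¹ : (Matrix (Fin n) (Fin n) ℂ)ˣ) : Matrix (Fin n) (Fin n) ℂ)} :=
  semisimple_part_mem_closure_conjugation_orbit_general A S U h1 h2 hS hU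
end
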